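/- Let 1 < q < 2, p ≥ 4, S > 0 and K > 0. Then there exist Λ > 0 and d₀ > 0 such that for every λ ∈ (0, Λ) and all real numbers A, B, D, F with A > 0, B ≥ 0, D > 0, A + B = F + D, |F| ≤ λ K A^{q/2}, (2−q)A < (p−q)D and D ≤ S^{−p/2} A^{p/2}, one has A/2 + B/4 − F/q − D/p ≥ d₀. -/

import Mathlib

/-!
On the Nehari manifold the constraint `(2 - q) A < (p - q) D` together with the Sobolev trace
bound `D ≤ S^{-p/2} A^{p/2}` forces `A` above a fixed threshold `A₀ > 0`. Eliminating `B` with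
`A + B = F + D` leaves `A/4 - (1/q - 1/4)|F|` as a lower bound for the energy, and since
`q/2 < 1`, on `A ≥ A₀` the sublinear term `λ K A^{q/2}` is at most `λ K A₀^{q/2-1} A`, hence
at most `A/8` once `λ` is small. The energy is then at least `A/8 ≥ A₀/8`.
-/

open Real

theorem rpow_inv_sub_one_lt_of_mul_lt_rpow {r c A : ℝ} (hr : 1 < r) (hc : 0 ≤ c) (hA : 0 < A)
    (h : c * A < A ^ r) : c ^ (r - 1)⁻¹ < A := by
  rw [rpow_inv_lt_iff_of_pos hc hA.le (sub_pos.2 hr), rpow_sub_one hA.ne', lt_div_iff₀ hA]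
  exact h

theorem mul_lt_rpow_of_lt_of_le_rpow {a b S r A D : ℝ} (hb : 0 < b) (hS : 0 < S)
    (hlt : a * A < b * D) (hle : D ≤ S ^ (-r) * A ^ r) : a * S ^ r / b * A < A ^ r := by
  have hSr : 0 < S ^ r := rpow_pos_of_pos hS r
  rw [rpow_neg hS.le] at hle
  rw [div_mul_eq_mul_div, div_lt_iff₀ hb]
  calc a * S ^ r * A = a * A * S ^ r := by ring
    _ < b * ((S ^ r)⁻¹ * A ^ r) * S ^ r :=
      mul_lt_mul_of_pos_right (hlt.trans_le (mul_le_mul_of_nonneg_left hle hb.le)) hSr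
    _ = A ^ r * b := by field_simp

theorem rpow_le_rpow_sub_one_mul {s A₀ A : ℝ} (hs : s ≤ 1) (hA₀ : 0 < A₀) (hA : A₀ ≤ A) :
    A ^ s ≤ A₀ ^ (s - 1) * A := by
  have hApos : 0 < A := hA₀.trans_le hA
  calc A ^ s = A ^ (s - 1) * A := by
        rw [rpow_sub_one hApos.ne', div_mul_cancel₀ _ hApos.ne']
    _ ≤ A₀ ^ (s - 1) * A :=
      mul_le_mul_of_nonneg_right (rpow_le_rpow_of_nonpos hA₀ hA (by linarith)) hApos.le

theorem div_four_sub_mul_abs_le_energy {q p A B D F : ℝ} (hq : 0 < q) (hq4 : q ≤ 4)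
    (hp : 4 ≤ p) (hD : 0 ≤ D) (hsum : A + B = F + D) :
    A / 4 - (1 / q - 1 / 4) * |F| ≤ A / 2 + B / 4 - F / q - D / p := by
  have hF : (1 / q - 1 / 4) * F ≤ (1 / q - 1 / 4) * |F| :=
    mul_le_mul_of_nonneg_left (le_abs_self F) (sub_nonneg.2 (one_div_le_one_div_of_le hq hq4))
  have hDp : 0 ≤ (1 / 4 - 1 / p) * D :=
    mul_nonneg (sub_nonneg.2 (one_div_le_one_div_of_le (by norm_num) hp)) hD
  have hE : A / 2 + B / 4 - F / q - D / p =
      A / 4 - (1 / q - 1 / 4) * F + (1 / 4 - 1 / p) * D := by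
    rw [show B = F + D - A by linarith]; ring
  linarith

theorem nehari_minus_energy_pos (q p S K : ℝ) (hq1 : 1 < q) (hq2 : q < 2) (hp : 4 ≤ p)
    (hS : 0 < S) (hK : 0 < K) :
    ∃ Λ d₀ : ℝ, 0 < Λ ∧ 0 < d₀ ∧ ∀ lam A B D F : ℝ, 0 < lam → lam < Λ →
      0 < A → 0 ≤ B → 0 < D → A + B = F + D → |F| ≤ lam * K * A ^ (q / 2) →
      (2 - q) * A < (p - q) * D → D ≤ S ^ (-(p / 2)) * A ^ (p / 2) →
      d₀ ≤ A / 2 + B / 4 - F / q - D / p := by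
  have hq : 0 < q := by linarith
  have hcoef : 0 < 1 / q - 1 / 4 := sub_pos.2 (one_div_lt_one_div_of_lt hq (by linarith))
  have hpq : 0 < p - q := by linarith
  set C := (2 - q) * S ^ (p / 2) / (p - q)
  have hC : 0 < C := div_pos (mul_pos (by linarith) (rpow_pos_of_pos hS _)) hpq
  set A₀ := C ^ (p / 2 - 1)⁻¹
  have hA₀ : 0 < A₀ := rpow_pos_of_pos hC _
  set c := (1 / q - 1 / 4) * K * A₀ ^ (q / 2 - 1)
  have hc : 0 < c := mul_pos (mul_pos hcoef hK) (rpow_pos_of_pos hA₀ _)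
  refine ⟨1 / (8 * c), A₀ / 8, by positivity, by positivity, ?_⟩
  intro lam A B D F hlam hlamΛ hA _ hD hsum hF hlt hle
  have hA₀A : A₀ < A := rpow_inv_sub_one_lt_of_mul_lt_rpow (by linarith) hC.le hA
    (mul_lt_rpow_of_lt_of_le_rpow hpq hS hlt hle)
  have hsmall : lam * c < 1 / 8 := by
    rw [lt_div_iff₀ (by positivity)] at hlamΛ
    linarith
  have hFA : (1 / q - 1 / 4) * |F| ≤ lam * c * A :=
    calc (1 / q - 1 / 4) * |F| ≤ (1 / q - 1 / 4) * (lam * K * A ^ (q / 2)) := by gcongr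
      _ ≤ (1 / q - 1 / 4) * (lam * K * (A₀ ^ (q / 2 - 1) * A)) := by
        gcongr; exact rpow_le_rpow_sub_one_mul (by linarith) hA₀ hA₀A.le
      _ = lam * c * A := by ring
  calc A₀ / 8 ≤ A / 4 - lam * c * A := by linarith [mul_lt_mul_of_pos_right hsmall hA]
    _ ≤ A / 4 - (1 / q - 1 / 4) * |F| := by linarith
    _ ≤ A / 2 + B / 4 - F / q - D / p :=
      div_four_sub_mul_abs_le_energy hq (by linarith) hp hD.le hsum
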